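/- arXiv:1908.06736 — 4 statements merged into one kernel-verified Lean document; each statement's English description precedes it below -/
import Mathlib

section
/- Let z ∈ ℝⁿ have strictly positive entries and let f : ℝⁿ → ℝ be continuous on the positive orthant, positively homogeneous of degree t ∈ ℝ with t > -(n+1), and such that |f| is integrable on Δ_z = {x ∈ ℝⁿ₊ : zᵀx ≤ 1}. Then ∫_{Δ_z} f(x) dx = (1/Γ(1+n+t)) · ∫_{ℝⁿ₊} f(x) exp(-zᵀx) dx. -/
/-!
Write `exp (-⟪z, x⟫) = ∫_{s > ⟪z, x⟫} exp (-s) ds` and exchange the order of integration: the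
orthant integral becomes `∫_{s > 0} exp (-s) (∫_{Δ_s} f) ds`, where `Δ_s = s • Δ_1` is the simplex
`{x ≥ 0 | ⟪z, x⟫ ≤ s}`. The change of variables `x ↦ s • x` and homogeneity give
`∫_{Δ_s} f = s ^ (n + t) ∫_{Δ_1} f`, and `∫_{s > 0} exp (-s) s ^ (n + t) ds = Γ(1 + n + t)`.
The same computation for `|f|` justifies Fubini's theorem.
-/

open MeasureTheory Finset Pointwise

lemma integrableOn_smul_set_iff {E F : Type*} [NormedAddCommGroup E] [NormedSpace ℝ E]
    [MeasurableSpace E] [BorelSpace E] [FiniteDimensional ℝ E] (μ : Measure E)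
    [μ.IsAddHaarMeasure] [NormedAddCommGroup F] {f : E → F} {s : Set E} (hs : MeasurableSet s)
    {r : ℝ} (hr : r ≠ 0) :
    IntegrableOn f (r • s) μ ↔ IntegrableOn (fun x => f (r • x)) s μ := by
  rw [← integrable_indicator_iff (hs.const_smul₀ r), ← integrable_indicator_iff hs,
    ← integrable_comp_smul_iff μ _ hr]
  congr! 1
  ext x
  by_cases hx : x ∈ s <;> simp [hx, Set.smul_mem_smul_set_iff₀ hr]

variable {ι : Type*}

def PosHomogeneous (f : (ι → ℝ) → ℝ) (t : ℝ) : Prop :=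
  ∀ l : ℝ, 0 < l → ∀ x : ι → ℝ, (∀ i, 0 < x i) → f (l • x) = l ^ t * f x

lemma PosHomogeneous.abs {f : (ι → ℝ) → ℝ} {t : ℝ} (hf : PosHomogeneous f t) :
    PosHomogeneous (fun x => |f x|) t := by
  intro l hl x hx
  change |f (l • x)| = l ^ t * |f x|
  rw [hf l hl x hx, abs_mul, abs_of_pos (Real.rpow_pos_of_pos hl t)]

variable [Fintype ι]

def simplexLE (z : ι → ℝ) (r : ℝ) : Set (ι → ℝ) := Set.Ici 0 ∩ {x | ∑ i, z i * x i ≤ r}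

lemma measurableSet_simplexLE (z : ι → ℝ) (r : ℝ) : MeasurableSet (simplexLE z r) :=
  measurableSet_Ici.inter <| measurableSet_le (by fun_prop) measurable_const

lemma smul_simplexLE (z : ι → ℝ) {r : ℝ} (hr : 0 < r) (s : ℝ) :
    r • simplexLE z s = simplexLE z (r * s) := by
  ext x
  have hsum : ∑ i, z i * (r⁻¹ * x i) = r⁻¹ * ∑ i, z i * x i := by
    rw [mul_sum]; exact sum_congr rfl fun i _ => by ring
  simp only [simplexLE, Set.mem_smul_set_iff_inv_smul_mem₀ hr.ne', Set.mem_inter_iff,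
    Set.mem_Ici, Set.mem_ofPred, Pi.smul_apply, smul_eq_mul, hsum, Pi.le_def, Pi.zero_apply,
    inv_mul_le_iff₀ hr]
  simp [hr]

lemma ae_forall_apply_ne_zero : ∀ᵐ x : ι → ℝ, ∀ i, x i ≠ 0 :=
  ae_all_iff.2 fun i => Measure.ae_eval_ne _ i 0

namespace PosHomogeneous

variable {f : (ι → ℝ) → ℝ} {t : ℝ}

lemma ae_smul_eq (hf : PosHomogeneous f t) {r : ℝ} (hr : 0 < r) :
    ∀ᵐ x, x ∈ Set.Ici 0 → f (r • x) = r ^ t * f x := by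
  filter_upwards [ae_forall_apply_ne_zero] with x hx hx0
  exact hf r hr x fun i => (hx0 i).lt_of_ne' (hx i)

lemma setIntegral_simplexLE (hf : PosHomogeneous f t) (z : ι → ℝ) {r : ℝ} (hr : 0 < r) :
    ∫ x in simplexLE z r, f x = r ^ (Fintype.card ι + t) * ∫ x in simplexLE z 1, f x := by
  have hscale := Measure.setIntegral_comp_smul_of_pos volume f (simplexLE z 1) hr
  rw [smul_simplexLE z hr, mul_one, Module.finrank_fintype_fun_eq_card, smul_eq_mul,
    eq_inv_mul_iff_mul_eq₀ (by positivity)] at hscale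
  have hhom : ∫ x in simplexLE z 1, f (r • x) = r ^ t * ∫ x in simplexLE z 1, f x := by
    rw [← integral_const_mul]
    refine setIntegral_congr_ae (measurableSet_simplexLE z 1) ?_
    filter_upwards [hf.ae_smul_eq hr] with x hx hxΔ using hx hxΔ.1
  rw [← hscale, hhom, Real.rpow_add hr, Real.rpow_natCast, mul_assoc]

lemma integrableOn_simplexLE (hf : PosHomogeneous f t) {z : ι → ℝ} {r : ℝ} (hr : 0 < r)
    (hint : IntegrableOn f (simplexLE z 1)) : IntegrableOn f (simplexLE z r) := by
  rw [← mul_one r, ← smul_simplexLE z hr,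
    integrableOn_smul_set_iff volume (measurableSet_simplexLE z 1) hr.ne']
  refine Integrable.congr (hint.const_mul (r ^ t)) ?_
  filter_upwards [ae_restrict_mem (measurableSet_simplexLE z 1),
    ae_restrict_of_ae (hf.ae_smul_eq hr)] with x hxΔ hx using (hx hxΔ.1).symm

end PosHomogeneous

noncomputable def expLayer (z : ι → ℝ) (f : (ι → ℝ) → ℝ) : (ι → ℝ) × ℝ → ℝ :=
  {p | ∑ i, z i * p.1 i ≤ p.2}.indicator fun p => Real.exp (-p.2) * f p.1

section expLayer

variable (z : ι → ℝ) {f : (ι → ℝ) → ℝ}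

lemma norm_expLayer (p : (ι → ℝ) × ℝ) : ‖expLayer z f p‖ = expLayer z (fun x => |f x|) p := by
  by_cases hp : ∑ i, z i * p.1 i ≤ p.2 <;> simp [expLayer, hp]

lemma expLayer_section_eq_indicator (s : ℝ) :
    (fun x => expLayer z f (x, s)) =
      {x | ∑ i, z i * x i ≤ s}.indicator fun x => Real.exp (-s) * f x :=
  rfl

lemma setIntegral_orthant_expLayer (s : ℝ) :
    ∫ x in Set.Ici 0, expLayer z f (x, s) = Real.exp (-s) * ∫ x in simplexLE z s, f x := by
  rw [expLayer_section_eq_indicator,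
    setIntegral_indicator (measurableSet_le (by fun_prop) measurable_const), integral_const_mul]
  rfl

lemma setIntegral_Ioi_expLayer {x : ι → ℝ} (hx : 0 ≤ ∑ i, z i * x i) :
    ∫ s in Set.Ioi 0, expLayer z f (x, s) = f x * Real.exp (-∑ i, z i * x i) := by
  have hsection : (fun s => expLayer z f (x, s)) =
      (Set.Ici (∑ i, z i * x i)).indicator fun s => Real.exp (-s) * f x :=
    rfl
  rw [hsection, ← integral_Ici_eq_integral_Ioi, setIntegral_indicator measurableSet_Ici,
    Set.inter_eq_right.2 (Set.Ici_subset_Ici.2 hx), integral_Ici_eq_integral_Ioi,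
    integral_mul_const, integral_exp_neg_Ioi, mul_comm]

lemma aestronglyMeasurable_expLayer (hf : ContinuousOn f (Set.Ici 0)) :
    AEStronglyMeasurable (expLayer z f)
      ((volume.restrict (Set.Ici 0)).prod (volume.restrict (Set.Ioi 0))) := by
  rw [Measure.prod_restrict]
  refine AEStronglyMeasurable.indicator ?_ (measurableSet_le (by fun_prop) measurable_snd)
  refine ContinuousOn.aestronglyMeasurable ?_ (measurableSet_Ici.prod measurableSet_Ioi)
  exact (Real.continuous_exp.comp continuous_snd.neg).continuousOn.mul
    (hf.comp continuousOn_fst fun p hp => hp.1)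

lemma integrable_expLayer {t : ℝ} (hf : PosHomogeneous f t) (hcont : ContinuousOn f (Set.Ici 0))
    (ht : -(Fintype.card ι + 1 : ℝ) < t) (hint : IntegrableOn f (simplexLE z 1)) :
    Integrable (expLayer z f)
      ((volume.restrict (Set.Ici 0)).prod (volume.restrict (Set.Ioi 0))) := by
  have hmeas (s : ℝ) : MeasurableSet {x : ι → ℝ | ∑ i, z i * x i ≤ s} :=
    measurableSet_le (by fun_prop) measurable_const
  rw [integrable_prod_iff' (aestronglyMeasurable_expLayer z hcont)]
  constructor
  · filter_upwards [ae_restrict_mem measurableSet_Ioi] with s hs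
    rw [expLayer_section_eq_indicator, integrable_indicator_iff (hmeas s), IntegrableOn,
      Measure.restrict_restrict (hmeas s), Set.inter_comm]
    exact (hf.integrableOn_simplexLE hs hint).const_mul _
  · have hGamma := (Real.GammaIntegral_convergent (by linarith : 0 < Fintype.card ι + t + 1))
      |>.mul_const (∫ x in simplexLE z 1, |f x|)
    refine hGamma.congr ?_
    filter_upwards [ae_restrict_mem measurableSet_Ioi] with s hs
    simp only [norm_expLayer, setIntegral_orthant_expLayer, hf.abs.setIntegral_simplexLE z hs,
      add_sub_cancel_right, mul_assoc]

end expLayer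

theorem PosHomogeneous.integral_orthant_mul_exp {f : (ι → ℝ) → ℝ} {t : ℝ}
    (hf : PosHomogeneous f t) (hcont : ContinuousOn f (Set.Ici 0)) {z : ι → ℝ}
    (hz : ∀ i, 0 ≤ z i) (ht : -(Fintype.card ι + 1 : ℝ) < t)
    (hint : IntegrableOn f (simplexLE z 1)) :
    ∫ x in Set.Ici 0, f x * Real.exp (-∑ i, z i * x i) =
      Real.Gamma (Fintype.card ι + t + 1) * ∫ x in simplexLE z 1, f x := by
  calc ∫ x in Set.Ici 0, f x * Real.exp (-∑ i, z i * x i)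
      = ∫ x in Set.Ici 0, ∫ s in Set.Ioi 0, expLayer z f (x, s) :=
        setIntegral_congr_fun measurableSet_Ici fun x hx =>
          (setIntegral_Ioi_expLayer z (sum_nonneg fun i _ => mul_nonneg (hz i) (hx i))).symm
    _ = ∫ s in Set.Ioi 0, ∫ x in Set.Ici 0, expLayer z f (x, s) :=
        integral_integral_swap (integrable_expLayer z hf hcont ht hint)
    _ = ∫ s in Set.Ioi 0,
          Real.exp (-s) * s ^ (Fintype.card ι + t + 1 - 1) * ∫ x in simplexLE z 1, f x :=
        setIntegral_congr_fun measurableSet_Ioi fun s hs => by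
          rw [setIntegral_orthant_expLayer, hf.setIntegral_simplexLE z hs, add_sub_cancel_right,
            mul_assoc]
    _ = Real.Gamma (Fintype.card ι + t + 1) * ∫ x in simplexLE z 1, f x := by
      rw [integral_mul_const, Real.Gamma_eq_integral (by linarith)]

theorem integral_simplex_eq_integral_orthant_exp (n : ℕ) (t : ℝ) (z : Fin n → ℝ)
    (f : (Fin n → ℝ) → ℝ)
    (hz : ∀ i, 0 < z i)
    (hf_cont : ContinuousOn f {x : Fin n → ℝ | ∀ i, 0 ≤ x i})
    (hf_homog : ∀ (l : ℝ), 0 < l → ∀ x : Fin n → ℝ, (∀ i, 0 < x i) →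
      f (l • x) = l ^ t * f x)
    (ht : -(n + 1 : ℝ) < t)
    (hf_int : IntegrableOn (fun x => |f x|)
      {x : Fin n → ℝ | (∀ i, 0 ≤ x i) ∧ ∑ i, z i * x i ≤ 1}) :
    ∫ x in {x : Fin n → ℝ | (∀ i, 0 ≤ x i) ∧ ∑ i, z i * x i ≤ 1}, f x =
      (1 / Real.Gamma (1 + n + t)) *
        ∫ x in {x : Fin n → ℝ | ∀ i, 0 ≤ x i}, f x * Real.exp (-∑ i, z i * x i) := by
  have hint : IntegrableOn f (simplexLE z 1) :=
    (integrable_norm_iff ((hf_cont.mono Set.inter_subset_left).aestronglyMeasurable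
      (measurableSet_simplexLE z 1))).1 hf_int
  have key := PosHomogeneous.integral_orthant_mul_exp hf_homog hf_cont (fun i => (hz i).le)
    (by simpa using ht) hint
  rw [Fintype.card_fin, add_comm _ (1 : ℝ), ← add_assoc] at key
  have hΓ : Real.Gamma (1 + n + t) ≠ 0 := (Real.Gamma_pos_of_pos (by linarith)).ne'
  calc ∫ x in {x : Fin n → ℝ | (∀ i, 0 ≤ x i) ∧ ∑ i, z i * x i ≤ 1}, f x
      = 1 / Real.Gamma (1 + n + t) * (Real.Gamma (1 + n + t) * ∫ x in simplexLE z 1, f x) := by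
        rw [one_div, inv_mul_cancel_left₀ hΓ]; rfl
    _ = _ := by rw [← key]; rfl
end

section
/- Let f be a homogeneous polynomial of degree t in n variables, f(x) = Σ_{|α|=t} f_α x^α, and let z ∈ ℝⁿ have strictly positive entries. Then ∫_{Δ_z} f(x) dx = (1/(n+t)!) · f̂(1/z) / (z₁⋯zₙ), where Δ_z = {x ∈ ℝⁿ₊ : zᵀx ≤ 1}, 1/z = (1/z₁,…,1/zₙ), and f̂(x) = Σ_{|α|=t} α₁!⋯αₙ! f_α x^α. -/
/-!
Slicing the simplex `{x ≥ 0, z ⬝ x ≤ c}` at first coordinate `x₀ ∈ [0, c / z₀]` leaves the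
simplex of the remaining weights with bound `c - z₀ x₀`. Carrying a factor `(c - z ⬝ x) ^ m`
through the induction on the dimension, each slicing step is a one-dimensional Beta integral
`∫₀¹ xᵃ (1 - x)ᵐ = a! m! / (a + m + 1)!`, so every monomial `xᵅ` integrates to
`∏ αᵢ! zᵢ^-(αᵢ+1) / (n + |α|)!`. Homogeneity makes the denominator `(n + t)!` the same for all
monomials of `f`, and linearity gives the theorem.
-/

open MeasureTheory Finset

/-- The Bombieri polynomial of `p`, evaluated at `x`: each coefficient `p_α` is
multiplied by `α₁! ⋯ αₙ!`. -/
noncomputable def bombieriEval {n : ℕ} (p : MvPolynomial (Fin n) ℝ) (x : Fin n → ℝ) : ℝ :=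
  ∑ α ∈ p.support, (∏ i, (Nat.factorial (α i) : ℝ)) * p.coeff α * ∏ i, x i ^ α i

open scoped Nat

theorem integral_pow_mul_one_sub_pow (a m : ℕ) :
    ∫ x in (0 : ℝ)..1, x ^ a * (1 - x) ^ m = (a ! * m ! / (a + m + 1)! : ℝ) := by
  have hre : ∀ k : ℕ, 0 < ((k : ℂ) + 1).re := fun k => by
    simp only [Complex.add_re, Complex.natCast_re, Complex.one_re]
    positivity
  have hB := Complex.Gamma_mul_Gamma_eq_betaIntegral (hre a) (hre m)
  rw [show (a + 1 + (m + 1) : ℂ) = ((a + m + 1 : ℕ) : ℂ) + 1 by push_cast; ring,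
    Complex.Gamma_nat_eq_factorial, Complex.Gamma_nat_eq_factorial,
    Complex.Gamma_nat_eq_factorial, Complex.betaIntegral] at hB
  simp only [add_sub_cancel_right, Complex.cpow_natCast] at hB
  apply Complex.ofReal_injective
  have hne : ((a + m + 1)! : ℂ) ≠ 0 := by exact_mod_cast (a + m + 1).factorial_ne_zero
  rw [← intervalIntegral.integral_ofReal]
  push_cast
  rw [eq_div_iff hne, hB]
  ring

theorem integral_pow_mul_sub_mul_pow (a m : ℕ) {z : ℝ} (hz : z ≠ 0) (c : ℝ) :
    ∫ x in (0 : ℝ)..c / z, x ^ a * (c - z * x) ^ m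
      = a ! * m ! / (a + m + 1)! * z⁻¹ ^ (a + 1) * c ^ (a + m + 1) := by
  have hsubst : ∀ u : ℝ, (c / z * u) ^ a * (c - z * (c / z * u)) ^ m
      = (c / z) ^ a * c ^ m * (u ^ a * (1 - u) ^ m) := fun u => by
    have hzc : c - z * (c / z * u) = c * (1 - u) := by field_simp
    rw [hzc, mul_pow c]; ring
  have hscale := intervalIntegral.smul_integral_comp_mul_left
    (fun x => x ^ a * (c - z * x) ^ m) (c / z) (a := 0) (b := 1)
  rw [mul_zero, mul_one] at hscale
  rw [← hscale]
  simp only [hsubst, intervalIntegral.integral_const_mul, integral_pow_mul_one_sub_pow,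
    smul_eq_mul]
  ring

section Simplex

variable {ι : Type*} [Fintype ι]

def simplex (z : ι → ℝ) (c : ℝ) : Set (ι → ℝ) :=
  {x | (∀ i, 0 ≤ x i) ∧ ∑ i, z i * x i ≤ c}

theorem isClosed_simplex (z : ι → ℝ) (c : ℝ) : IsClosed (simplex z c) := by
  simp only [simplex, Set.ofPred_and, Set.ofPred_forall]
  exact (isClosed_iInter fun i => isClosed_le continuous_const (continuous_apply i)).inter
    (isClosed_le (by fun_prop) continuous_const)

theorem measurableSet_simplex (z : ι → ℝ) (c : ℝ) : MeasurableSet (simplex z c) :=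
  (isClosed_simplex z c).measurableSet

theorem isCompact_simplex {z : ι → ℝ} (hz : ∀ i, 0 < z i) (c : ℝ) :
    IsCompact (simplex z c) := by
  refine (isCompact_Icc (a := 0) (b := fun i => c / z i)).of_isClosed_subset
    (isClosed_simplex z c) fun x ⟨hx, hsum⟩ => ⟨hx, fun i => ?_⟩
  rw [le_div_iff₀' (hz i)]
  exact (single_le_sum (fun j _ => mul_nonneg (hz j).le (hx j)) (mem_univ i)).trans hsum

theorem simplex_eq_empty {z : ι → ℝ} (hz : ∀ i, 0 ≤ z i) {c : ℝ} (hc : c < 0) :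
    simplex z c = ∅ :=
  Set.eq_empty_of_forall_notMem fun _ ⟨hx, hsum⟩ =>
    (sum_nonneg fun i _ => mul_nonneg (hz i) (hx i)).not_gt (hsum.trans_lt hc)

end Simplex

theorem cons_mem_simplex_iff {n : ℕ} {z : Fin (n + 1) → ℝ} {c x₀ : ℝ} {y : Fin n → ℝ} :
    Fin.cons x₀ y ∈ simplex z c ↔ 0 ≤ x₀ ∧ y ∈ simplex (Fin.tail z) (c - z 0 * x₀) := by
  simp only [simplex, Set.mem_ofPred_eq, Fin.forall_fin_succ, Fin.sum_univ_succ, Fin.cons_zero,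
    Fin.cons_succ, Fin.tail, and_assoc]
  constructor <;> rintro ⟨h₀, h, hsum⟩ <;> exact ⟨h₀, h, by linarith⟩

theorem integral_fin_succ_eq_integral_integral_cons {E : Type*} [NormedAddCommGroup E]
    [NormedSpace ℝ E] {n : ℕ} {F : (Fin (n + 1) → ℝ) → E} (hF : Integrable F) :
    ∫ x, F x = ∫ x₀, ∫ y, F (Fin.cons x₀ y) := by
  have hmp := (volume_preserving_piFinSuccAbove (fun _ : Fin (n + 1) => ℝ) 0).symm
  have hF' : Integrable (fun p => F ((MeasurableEquiv.piFinSuccAbove _ 0).symm p))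
      ((volume : Measure ℝ).prod volume) :=
    (hmp.integrable_comp_emb (MeasurableEquiv.measurableEmbedding _)).mpr hF
  rw [← hmp.integral_comp', Measure.volume_eq_prod, integral_prod _ hF']
  simp only [MeasurableEquiv.piFinSuccAbove_symm_apply, Fin.insertNthEquiv, Equiv.coe_fn_mk,
    Fin.insertNth_zero, Fin.zero_succAbove, cast_eq]

theorem setIntegral_simplex_succ {E : Type*} [NormedAddCommGroup E] [NormedSpace ℝ E] {n : ℕ}
    {z : Fin (n + 1) → ℝ} (hz : ∀ i, 0 < z i) {c : ℝ} {F : (Fin (n + 1) → ℝ) → E}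
    (hF : IntegrableOn F (simplex z c)) :
    ∫ x in simplex z c, F x
      = ∫ x₀ in Set.Icc 0 (c / z 0),
          ∫ y in simplex (Fin.tail z) (c - z 0 * x₀), F (Fin.cons x₀ y) := by
  have hslice : ∀ x₀, ∫ y, (simplex z c).indicator F (Fin.cons x₀ y)
      = (Set.Ici 0).indicator
          (fun x₀ => ∫ y in simplex (Fin.tail z) (c - z 0 * x₀), F (Fin.cons x₀ y)) x₀ := by
    intro x₀
    by_cases h₀ : 0 ≤ x₀
    · rw [Set.indicator_of_mem (Set.mem_Ici.mpr h₀),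
        ← integral_indicator (measurableSet_simplex _ _)]
      congr 1 with y
      by_cases hy : y ∈ simplex (Fin.tail z) (c - z 0 * x₀)
      · rw [Set.indicator_of_mem hy, Set.indicator_of_mem (cons_mem_simplex_iff.mpr ⟨h₀, hy⟩)]
      · rw [Set.indicator_of_notMem hy,
          Set.indicator_of_notMem fun h => hy (cons_mem_simplex_iff.mp h).2]
    · simp [cons_mem_simplex_iff, h₀]
  rw [← integral_indicator (measurableSet_simplex z c),
    integral_fin_succ_eq_integral_integral_cons
      ((integrable_indicator_iff (measurableSet_simplex z c)).mpr hF)]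
  simp only [hslice]
  rw [integral_indicator measurableSet_Ici]
  refine setIntegral_eq_of_subset_of_forall_sdiff_eq_zero measurableSet_Ici
    Set.Icc_subset_Ici_self fun x₀ ⟨h₀, hx₀⟩ => ?_
  have hneg : c - z 0 * x₀ < 0 := by
    have := lt_of_not_ge fun h => hx₀ ⟨h₀, h⟩
    rw [div_lt_iff₀' (hz 0)] at this
    linarith
  rw [simplex_eq_empty (z := Fin.tail z) (fun i => (hz i.succ).le) hneg, Measure.restrict_empty,
    integral_zero_measure]

theorem setIntegral_simplex_monomial_mul_pow {n : ℕ} {z : Fin n → ℝ} (hz : ∀ i, 0 < z i)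
    (α : Fin n → ℕ) (m : ℕ) {c : ℝ} (hc : 0 ≤ c) :
    ∫ x in simplex z c, (∏ i, x i ^ α i) * (c - ∑ i, z i * x i) ^ m
      = (∏ i, (α i)! * (z i)⁻¹ ^ (α i + 1)) * m ! / (n + m + ∑ i, α i)!
          * c ^ (n + m + ∑ i, α i) := by
  induction n generalizing c with
  | zero =>
    have huniv : simplex z c = Set.univ := by ext x; simp [simplex, hc]
    simp [huniv, measureReal_def, volume_pi, Nat.factorial_ne_zero]
  | succ n ih =>
    have hF : Continuous fun x : Fin (n + 1) → ℝ =>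
        (∏ i, x i ^ α i) * (c - ∑ i, z i * x i) ^ m := by
      fun_prop
    have hcons : ∀ x₀ y, (∏ i, (Fin.cons x₀ y : Fin (n + 1) → ℝ) i ^ α i)
          * (c - ∑ i, z i * (Fin.cons x₀ y : Fin (n + 1) → ℝ) i) ^ m
        = x₀ ^ α 0 * ((∏ i, y i ^ Fin.tail α i)
          * ((c - z 0 * x₀) - ∑ i, Fin.tail z i * y i) ^ m) := by
      intro x₀ y
      simp only [Fin.prod_univ_succ, Fin.sum_univ_succ, Fin.cons_zero, Fin.cons_succ, Fin.tail]
      ring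
    set M := n + m + ∑ i, Fin.tail α i
    set K := (∏ i, (Fin.tail α i)! * (Fin.tail z i)⁻¹ ^ (Fin.tail α i + 1)) * m ! / M ! with hK
    have hslice : ∀ x₀ ∈ Set.Icc 0 (c / z 0),
        ∫ y in simplex (Fin.tail z) (c - z 0 * x₀), x₀ ^ α 0 * ((∏ i, y i ^ Fin.tail α i)
          * ((c - z 0 * x₀) - ∑ i, Fin.tail z i * y i) ^ m)
        = K * (x₀ ^ α 0 * (c - z 0 * x₀) ^ M) := by
      rintro x₀ ⟨-, hx₀⟩
      rw [le_div_iff₀' (hz 0)] at hx₀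
      rw [integral_const_mul,
        ih (z := Fin.tail z) (fun i => hz i.succ) (Fin.tail α) (sub_nonneg.mpr hx₀)]
      ring
    have hdeg : n + 1 + m + ∑ i, α i = α 0 + M + 1 := by
      simp only [M, Fin.sum_univ_succ, Fin.tail]
      omega
    rw [setIntegral_simplex_succ hz
      (hF.continuousOn.integrableOn_compact (isCompact_simplex hz c))]
    simp only [hcons]
    rw [setIntegral_congr_fun measurableSet_Icc hslice, integral_const_mul,
      integral_Icc_eq_integral_Ioc, ← intervalIntegral.integral_of_le (div_nonneg hc (hz 0).le),
      integral_pow_mul_sub_mul_pow _ _ (hz 0).ne', hdeg, Fin.prod_univ_succ, hK]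
    simp only [Fin.tail]
    field_simp

theorem setIntegral_simplex_one_monomial {n : ℕ} {z : Fin n → ℝ} (hz : ∀ i, 0 < z i)
    (α : Fin n → ℕ) :
    ∫ x in simplex z 1, ∏ i, x i ^ α i
      = (∏ i, ((α i)! : ℝ)) * (∏ i, (z i)⁻¹ ^ α i) / (n + ∑ i, α i)! * (∏ i, z i)⁻¹ := by
  have h := setIntegral_simplex_monomial_mul_pow hz α 0 zero_le_one
  simp only [one_pow, pow_zero, mul_one, Nat.factorial_zero, Nat.cast_one, add_zero] at h
  have hprod : ∏ i, ((α i)! : ℝ) * (z i)⁻¹ ^ (α i + 1)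
      = (∏ i, ((α i)! : ℝ)) * (∏ i, (z i)⁻¹ ^ α i) * (∏ i, z i)⁻¹ := by
    rw [← prod_inv_distrib, ← prod_mul_distrib, ← prod_mul_distrib]
    exact prod_congr rfl fun i _ => by ring
  rw [h, hprod]
  ring

theorem integral_homog_poly_simplex_z (n t : ℕ) (p : MvPolynomial (Fin n) ℝ)
    (hp : p.IsHomogeneous t) (z : Fin n → ℝ) (hz : ∀ i, 0 < z i) :
    ∫ x in {x : Fin n → ℝ | (∀ i, 0 ≤ x i) ∧ ∑ i, z i * x i ≤ 1},
        MvPolynomial.eval x p =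
      (1 / (Nat.factorial (n + t) : ℝ)) * bombieriEval p (fun i => (z i)⁻¹) *
        (∏ i, z i)⁻¹ := by
  have hdeg : ∀ α ∈ p.support, ∑ i, α i = t := fun α hα => by
    rw [hp.degree_eq_sum_deg_support hα, ← Finsupp.degree_apply, Finsupp.degree_eq_sum]
  change ∫ x in simplex z 1, _ = _
  simp_rw [MvPolynomial.eval_eq']
  rw [integral_finsetSum _ fun α _ =>
      (by fun_prop : Continuous _).continuousOn.integrableOn_compact (isCompact_simplex hz 1),
    bombieriEval, mul_sum, sum_mul]
  refine sum_congr rfl fun α hα => ?_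
  rw [integral_const_mul, setIntegral_simplex_one_monomial hz, hdeg α hα]
  ring
end

section
/- Let f be a homogeneous polynomial of degree t ≥ 1 in n variables and let ξ_t = e/θ where θ > 0 satisfies θᵗ = (n+1)(n+2)⋯(n+t) and e = (1,…,1). Then ∫_Δ f(x) dx = f̂(ξ_t)/n!, where Δ is the canonical simplex and f̂ is the Bombieri polynomial of f. -/
/-!
Peeling off the first coordinate slices the corner simplex `{x ≥ 0, ∑ xᵢ ≤ c}` of dimension
`n + 1` into `{a} × (corner simplex of size c - a, dimension n)`, `0 ≤ a ≤ c`. Induction on `n`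
together with the Beta integral `∫₀ᶜ aᵏ (c - a)ᵐ da = k! m! c^(k+m+1) / (k+m+1)!` gives the
Dirichlet moment formula `∫ xᵅ = α! c^(n+|α|) / (n+|α|)!`. For `f` homogeneous of degree `t` every
monomial has `|α| = t`, and `θᵗ = (n+t)!/n!` turns `α!/(n+t)!` into `α! θ⁻ᵗ / n!`, the matching term
of `f̂(ξ_t) / n!`.
-/

open MeasureTheory Finset

open Nat

def cornerSimplex (n : ℕ) (c : ℝ) : Set (Fin n → ℝ) :=
  {x | (∀ i, 0 ≤ x i) ∧ ∑ i, x i ≤ c}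

section cornerSimplex

variable {n : ℕ} {c : ℝ}

theorem cornerSimplex_subset_Icc : cornerSimplex n c ⊆ Set.Icc 0 (fun _ => c) :=
  fun _ hx => ⟨hx.1, fun i => (single_le_sum (fun j _ => hx.1 j) (mem_univ i)).trans hx.2⟩

theorem isClosed_cornerSimplex : IsClosed (cornerSimplex n c) := by
  simp only [cornerSimplex, Set.ofPred_and, Set.ofPred_forall]
  exact (isClosed_iInter fun i => isClosed_le continuous_const (continuous_apply i)).inter
    (isClosed_le (continuous_finsetSum _ fun i _ => continuous_apply i) continuous_const)

theorem isCompact_cornerSimplex : IsCompact (cornerSimplex n c) :=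
  isCompact_Icc.of_isClosed_subset isClosed_cornerSimplex cornerSimplex_subset_Icc

theorem Continuous.integrableOn_cornerSimplex {f : (Fin n → ℝ) → ℝ} (hf : Continuous f) :
    IntegrableOn f (cornerSimplex n c) :=
  hf.continuousOn.integrableOn_compact isCompact_cornerSimplex

theorem measurableSet_cornerSimplex : MeasurableSet (cornerSimplex n c) :=
  isClosed_cornerSimplex.measurableSet

theorem cornerSimplex_zero (hc : 0 ≤ c) : cornerSimplex 0 c = Set.univ := by
  ext x; simp [cornerSimplex, hc]

theorem indicator_cornerSimplex_cons (f : (Fin (n + 1) → ℝ) → ℝ) (a : ℝ) (y : Fin n → ℝ) :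
    (cornerSimplex (n + 1) c).indicator f (Fin.cons a y) =
      (Set.Icc 0 c).indicator
        (fun s => (cornerSimplex n (c - s)).indicator (fun y => f (Fin.cons s y)) y) a := by
  classical
  by_cases ha : 0 ≤ a
  · have hmem :
        Fin.cons a y ∈ cornerSimplex (n + 1) c ↔ a ≤ c ∧ y ∈ cornerSimplex n (c - a) := by
      simp only [cornerSimplex, Set.mem_ofPred_eq, Fin.forall_fin_succ, Fin.sum_univ_succ,
        Fin.cons_zero, Fin.cons_succ]
      constructor
      · rintro ⟨⟨-, hy⟩, hs⟩
        exact ⟨by linarith [sum_nonneg fun i (_ : i ∈ univ) => hy i], hy, by linarith⟩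
      · rintro ⟨-, hy, hs⟩
        exact ⟨⟨ha, hy⟩, by linarith⟩
    rw [Set.indicator_apply, Set.indicator_apply, Set.indicator_apply]
    simp only [hmem, Set.mem_Icc, ha, true_and]
    split_ifs <;> tauto
  · have : Fin.cons a y ∉ cornerSimplex (n + 1) c := fun h => ha (h.1 0)
    simp [Set.indicator_of_notMem this, ha]

theorem integral_cornerSimplex_succ (f : (Fin (n + 1) → ℝ) → ℝ)
    (hf : IntegrableOn f (cornerSimplex (n + 1) c)) :
    ∫ x in cornerSimplex (n + 1) c, f x =
      ∫ a in Set.Icc 0 c, ∫ y in cornerSimplex n (c - a), f (Fin.cons a y) := by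
  have e := (volume_preserving_piFinSuccAbove (fun _ : Fin (n + 1) => ℝ) 0).symm
  have hint : Integrable (fun p => (cornerSimplex (n + 1) c).indicator f
      ((MeasurableEquiv.piFinSuccAbove (fun _ : Fin (n + 1) => ℝ) 0).symm p))
      ((volume : Measure ℝ).prod volume) :=
    (e.integrable_comp_emb (MeasurableEquiv.measurableEmbedding _)).mpr
      (hf.integrable_indicator measurableSet_cornerSimplex)
  rw [← integral_indicator measurableSet_cornerSimplex, ← e.integral_comp',
    Measure.volume_eq_prod, integral_prod _ hint,
    ← integral_indicator measurableSet_Icc]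
  refine integral_congr_ae (Filter.Eventually.of_forall fun a => ?_)
  simp only [MeasurableEquiv.piFinSuccAbove_symm_apply, Fin.insertNthEquiv, Equiv.coe_fn_mk,
    Fin.insertNth_zero', indicator_cornerSimplex_cons]
  by_cases ha : a ∈ Set.Icc 0 c
  · simp only [Set.indicator_of_mem ha, integral_indicator measurableSet_cornerSimplex]
  · simp only [Set.indicator_of_notMem ha, integral_zero]

end cornerSimplex

theorem integral_pow_mul_sub_pow (a b : ℕ) {c : ℝ} (hc : 0 ≤ c) :
    ∫ x in 0..c, x ^ a * (c - x) ^ b = a ! * b ! / (a + b + 1)! * c ^ (a + b + 1) := by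
  rcases hc.eq_or_lt with rfl | hc
  · simp
  have hβ := Complex.betaIntegral_scaled (a + 1) (b + 1) hc
  rw [Complex.betaIntegral_eq_Gamma_mul_div _ _ (by simp; positivity) (by simp; positivity),
    show (a + 1 : ℂ) + (b + 1) = (a + b + 1 : ℕ) + 1 by push_cast; ring,
    Complex.Gamma_nat_eq_factorial, Complex.Gamma_nat_eq_factorial,
    Complex.Gamma_nat_eq_factorial] at hβ
  simp only [add_sub_cancel_right, Complex.cpow_natCast] at hβ
  apply Complex.ofReal_injective
  rw [← intervalIntegral.integral_ofReal]
  push_cast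
  rw [hβ]
  ring

theorem integral_cornerSimplex_monomial (n : ℕ) (α : Fin n → ℕ) {c : ℝ} (hc : 0 ≤ c) :
    ∫ x in cornerSimplex n c, ∏ i, x i ^ α i =
      (∏ i, ((α i)! : ℝ)) * c ^ (n + ∑ i, α i) / (n + ∑ i, α i)! := by
  induction n generalizing c with
  | zero => simp [cornerSimplex_zero hc, Measure.real, volume_pi]
  | succ n ih =>
    set M := n + ∑ i : Fin n, α i.succ
    calc ∫ x in cornerSimplex (n + 1) c, ∏ i, x i ^ α i
        = ∫ a in Set.Icc 0 c,
            (∏ i : Fin n, ((α i.succ)! : ℝ)) / M ! * (a ^ α 0 * (c - a) ^ M) := by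
          rw [integral_cornerSimplex_succ _ (Continuous.integrableOn_cornerSimplex (by fun_prop))]
          refine setIntegral_congr_fun measurableSet_Icc fun a ha => ?_
          simp only [Fin.prod_univ_succ, Fin.cons_zero, Fin.cons_succ]
          rw [integral_const_mul, ih _ (sub_nonneg.2 ha.2)]
          ring
      _ = _ := by
          rw [integral_const_mul, integral_Icc_eq_integral_Ioc,
            ← intervalIntegral.integral_of_le hc, integral_pow_mul_sub_pow _ _ hc,
            Fin.prod_univ_succ, Fin.sum_univ_succ,
            show n + 1 + (α 0 + ∑ i : Fin n, α i.succ) = α 0 + M + 1 by omega]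
          field_simp

theorem integral_cornerSimplex_one_eval {n : ℕ} (p : MvPolynomial (Fin n) ℝ) :
    ∫ x in cornerSimplex n 1, MvPolynomial.eval x p =
      ∑ d ∈ p.support, p.coeff d * (∏ i, ((d i)! : ℝ)) / (n + ∑ i, d i)! := by
  simp_rw [MvPolynomial.eval_eq']
  rw [integral_finsetSum _ fun d _ =>
    (Continuous.integrableOn_cornerSimplex (by fun_prop)).const_mul _]
  refine sum_congr rfl fun d _ => ?_
  rw [integral_const_mul, integral_cornerSimplex_monomial n (fun i => d i) zero_le_one, one_pow]
  ring

theorem prod_range_add_one_add_eq_factorial_div {K : Type*} [Field K] [CharZero K] (n t : ℕ) :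
    ∏ j ∈ range t, (n + 1 + j : K) = (n + t)! / n ! := by
  rw [eq_div_iff (Nat.cast_ne_zero.2 n.factorial_ne_zero), ← Nat.factorial_mul_ascFactorial,
    Nat.ascFactorial_eq_prod_range]
  push_cast
  ring

theorem MvPolynomial.IsHomogeneous.sum_eq_of_mem_support {σ R : Type*} [Fintype σ]
    [CommSemiring R] {t : ℕ} {p : MvPolynomial σ R} (hp : p.IsHomogeneous t) {d : σ →₀ ℕ}
    (hd : d ∈ p.support) : ∑ i, d i = t := by
  rw [← Finsupp.degree_eq_sum, Finsupp.degree_apply, ← hp.degree_eq_sum_deg_support hd]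

theorem integral_homog_poly_eq_bombieri_at_xi_general (n t : ℕ)
    (p : MvPolynomial (Fin n) ℝ) (hp : p.IsHomogeneous t) (θ : ℝ)
    (hθt : θ ^ t = ∏ j ∈ Finset.range t, (n + 1 + j : ℝ)) :
    ∫ x in {x : Fin n → ℝ | (∀ i, 0 ≤ x i) ∧ ∑ i, x i ≤ 1}, MvPolynomial.eval x p =
      bombieriEval p (fun _ => θ⁻¹) / (Nat.factorial n : ℝ) := by
  rw [prod_range_add_one_add_eq_factorial_div] at hθt
  change ∫ x in cornerSimplex n 1, _ = _
  rw [integral_cornerSimplex_one_eval, bombieriEval, sum_div]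
  refine sum_congr rfl fun d hd => ?_
  rw [prod_pow_eq_pow_sum, hp.sum_eq_of_mem_support hd, inv_pow, hθt]
  field_simp

theorem integral_homog_poly_eq_bombieri_at_xi (n t : ℕ) (ht : 1 ≤ t)
    (p : MvPolynomial (Fin n) ℝ) (hp : p.IsHomogeneous t) (θ : ℝ) (hθ : 0 < θ)
    (hθt : θ ^ t = ∏ j ∈ Finset.range t, (n + 1 + j : ℝ)) :
    ∫ x in {x : Fin n → ℝ | (∀ i, 0 ≤ x i) ∧ ∑ i, x i ≤ 1}, MvPolynomial.eval x p =
      bombieriEval p (fun _ => θ⁻¹) / (Nat.factorial n : ℝ) :=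
  integral_homog_poly_eq_bombieri_at_xi_general n t p hp θ hθt
end

section
/- For α ∈ ℝⁿ with each αᵢ > -1 and t := α₁+⋯+αₙ, the integral over the canonical simplex Δ ⊂ ℝⁿ of x^α equals Γ(1+α₁)⋯Γ(1+αₙ)/Γ(1+n+t). In the special case α ∈ ℕⁿ this gives ∫_Δ x^α dx = α₁!⋯αₙ!/(n+|α|)!. -/
/-!
Gamma-function trick. Integrating `∏ i, x i ^ α i * exp (-x i)` over the orthant gives
`∏ i, Γ(1 + α i)` by Fubini. Writing instead `exp (-∑ i, x i) = ∫_{r > ∑ i, x i} exp (-r) dr` and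
swapping the integrals gives `∫_0^∞ exp (-r) I(r) dr`, where `I(r)` is the integral of the monomial
over the simplex `∑ i, x i < r`; by homogeneity `I(r) = r ^ (n + ∑ i, α i) * I(1)`, so this is
`Γ(1 + n + ∑ i, α i) * I(1)`. The closed simplex lies between the simplices of size `1` and `r > 1`,
so its integral is squeezed between `I(1)` and `r ^ (n + ∑ i, α i) * I(1)`.
-/

open MeasureTheory Finset Set ENNReal Filter Topology

theorem lintegral_eq_ofReal_finrank_mul_lintegral_comp_smul {E : Type*} [NormedAddCommGroup E]
    [NormedSpace ℝ E] [MeasurableSpace E] [BorelSpace E] [FiniteDimensional ℝ E] (μ : Measure E)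
    [μ.IsAddHaarMeasure] (f : E → ℝ≥0∞) {R : ℝ} (hR : 0 < R) :
    ∫⁻ x, f x ∂μ = ENNReal.ofReal (R ^ Module.finrank ℝ E) * ∫⁻ x, f (R • x) ∂μ := by
  have hmap : ∫⁻ x, f (R • x) ∂μ = ENNReal.ofReal (R ^ Module.finrank ℝ E)⁻¹ * ∫⁻ x, f x ∂μ := by
    rw [show (fun x => f (R • x)) = fun x => f (MeasurableEquiv.smul₀ R hR.ne' x) from rfl,
      ← lintegral_map_equiv, MeasurableEquiv.coe_smul₀,
      Measure.map_addHaar_smul μ hR.ne', lintegral_smul_measure, abs_of_pos (by positivity),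
      smul_eq_mul]
  rw [hmap, ← mul_assoc, ← ENNReal.ofReal_mul (by positivity), mul_inv_cancel₀ (by positivity),
    ENNReal.ofReal_one, one_mul]

theorem lintegral_mul_ofReal_exp_neg {X : Type*} [MeasurableSpace X] (μ : Measure X) [SFinite μ]
    {f : X → ℝ≥0∞} (hf : Measurable f) {g : X → ℝ} (hg : Measurable g) :
    ∫⁻ x, f x * ENNReal.ofReal (Real.exp (-g x)) ∂μ =
      ∫⁻ r, ENNReal.ofReal (Real.exp (-r)) * ∫⁻ x in {x | g x < r}, f x ∂μ := by
  set F := {p : X × ℝ | g p.1 < p.2}.indicator fun p => f p.1 * ENNReal.ofReal (Real.exp (-p.2))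
  have hF : Measurable F := ((hf.comp measurable_fst).mul (by fun_prop)).indicator
    (measurableSet_lt (hg.comp measurable_fst) measurable_snd)
  calc ∫⁻ x, f x * ENNReal.ofReal (Real.exp (-g x)) ∂μ = ∫⁻ x, (∫⁻ r, F (x, r)) ∂μ := by
        refine lintegral_congr fun x => ?_
        change _ = ∫⁻ r, (Ioi (g x)).indicator (fun r => f x * ENNReal.ofReal (Real.exp (-r))) r
        rw [lintegral_indicator measurableSet_Ioi, lintegral_const_mul _ (by fun_prop),
          ← ofReal_integral_eq_lintegral_ofReal (integrableOn_exp_neg_Ioi _)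
            (ae_of_all _ fun r => (Real.exp_pos _).le), integral_exp_neg_Ioi]
    _ = ∫⁻ r, ∫⁻ x, F (x, r) ∂μ :=
        lintegral_lintegral_swap (f := fun x r => F (x, r)) hF.aemeasurable
    _ = _ := by
        refine lintegral_congr fun r => ?_
        change ∫⁻ x, {x | g x < r}.indicator
          (fun x => f x * ENNReal.ofReal (Real.exp (-r))) x ∂μ = _
        rw [lintegral_indicator (measurableSet_lt hg measurable_const),
          lintegral_mul_const' _ _ ofReal_ne_top, mul_comm]

theorem lintegral_Ioi_exp_neg_mul_rpow {s : ℝ} (hs : 0 < s) :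
    ∫⁻ r in Ioi 0, ENNReal.ofReal (Real.exp (-r) * r ^ (s - 1)) =
      ENNReal.ofReal (Real.Gamma s) := by
  rw [Real.Gamma_eq_integral hs, ofReal_integral_eq_lintegral_ofReal
    (Real.GammaIntegral_convergent hs)]
  exact (ae_restrict_iff' measurableSet_Ioi).2 (ae_of_all _ fun r (hr : 0 < r) => by positivity)

theorem Real.Gamma_one_add_natCast (k : ℕ) : Real.Gamma (1 + k) = k.factorial := by
  rw [add_comm, Real.Gamma_nat_eq_factorial]

theorem lintegral_pi_Ici_prod_rpow_mul_exp_neg {ι : Type*} [Fintype ι] (α : ι → ℝ)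
    (hα : ∀ i, -1 < α i) :
    ∫⁻ x in univ.pi fun _ => Ici 0, ENNReal.ofReal (∏ i, x i ^ α i * Real.exp (-x i)) =
      ENNReal.ofReal (∏ i, Real.Gamma (1 + α i)) := by
  have hμ : volume.restrict (univ.pi fun _ : ι => Ici (0 : ℝ)) =
      Measure.pi fun _ => volume.restrict (Ioi 0) := by
    rw [volume_pi, Measure.restrict_pi_pi, Measure.restrict_congr_set Ioi_ae_eq_Ici]
  have hGamma : ∀ i, ∫ u in Ioi 0, u ^ α i * Real.exp (-u) = Real.Gamma (1 + α i) := fun i => by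
    rw [Real.Gamma_eq_integral (by linarith [hα i]), add_sub_cancel_left]
    simp_rw [mul_comm]
  have hint : ∀ i, IntegrableOn (fun u : ℝ => u ^ α i * Real.exp (-u)) (Ioi 0) := fun i => by
    simpa only [add_sub_cancel_left, mul_comm] using
      Real.GammaIntegral_convergent (s := 1 + α i) (by linarith [hα i])
  rw [← ofReal_integral_eq_lintegral_ofReal (hμ ▸ Integrable.fintype_prod hint)
    ((ae_restrict_iff' (MeasurableSet.univ_pi fun _ => measurableSet_Ici)).2 (ae_of_all _
      fun x hx => prod_nonneg fun i _ => by have : 0 ≤ x i := hx i trivial; positivity)),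
    hμ, integral_fintype_prod_eq_prod fun i u => u ^ α i * Real.exp (-u)]
  simp_rw [hGamma]

-- The coordinate faces are included so that the closed simplex of size `r` lies inside the
-- half-open one of any size `s > r`.
def halfOpenSimplex (n : ℕ) (r : ℝ) : Set (Fin n → ℝ) := {x | (∀ i, 0 ≤ x i) ∧ ∑ i, x i < r}

def closedSimplex (n : ℕ) (r : ℝ) : Set (Fin n → ℝ) := {x | (∀ i, 0 ≤ x i) ∧ ∑ i, x i ≤ r}

section Simplex

variable {n : ℕ} {r : ℝ}

theorem measurableSet_closedSimplex (n : ℕ) (r : ℝ) : MeasurableSet (closedSimplex n r) := by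
  simp only [closedSimplex, ofPred_and, ofPred_forall]
  exact (MeasurableSet.iInter fun i =>
    measurableSet_le measurable_const (measurable_pi_apply i)).inter
    (measurableSet_le (by fun_prop) measurable_const)

theorem measurableSet_halfOpenSimplex (n : ℕ) (r : ℝ) : MeasurableSet (halfOpenSimplex n r) := by
  simp only [halfOpenSimplex, ofPred_and, ofPred_forall]
  exact (MeasurableSet.iInter fun i =>
    measurableSet_le measurable_const (measurable_pi_apply i)).inter
    (measurableSet_lt (by fun_prop) measurable_const)

theorem pos_of_mem_halfOpenSimplex {x : Fin n → ℝ} (hx : x ∈ halfOpenSimplex n r) : 0 < r :=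
  (sum_nonneg fun i _ => hx.1 i).trans_lt hx.2

theorem smul_mem_halfOpenSimplex_iff (hr : 0 < r) {x : Fin n → ℝ} :
    r • x ∈ halfOpenSimplex n r ↔ x ∈ halfOpenSimplex n 1 := by
  simp only [halfOpenSimplex, mem_ofPred_eq, Pi.smul_apply, smul_eq_mul, ← mul_sum,
    mul_nonneg_iff_of_pos_left hr, mul_lt_iff_lt_one_right hr]

theorem halfOpenSimplex_subset_closedSimplex : halfOpenSimplex n r ⊆ closedSimplex n r :=
  fun _ hx => ⟨hx.1, hx.2.le⟩

theorem closedSimplex_subset_halfOpenSimplex {s : ℝ} (hrs : r < s) :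
    closedSimplex n r ⊆ halfOpenSimplex n s :=
  fun _ hx => ⟨hx.1, hx.2.trans_lt hrs⟩

theorem lintegral_halfOpenSimplex_prod_rpow_eq (α : Fin n → ℝ) (hr : 0 < r) :
    ∫⁻ x in halfOpenSimplex n r, ENNReal.ofReal (∏ i, x i ^ α i) =
      ENNReal.ofReal (r ^ (n + ∑ i, α i)) *
        ∫⁻ x in halfOpenSimplex n 1, ENNReal.ofReal (∏ i, x i ^ α i) := by
  rw [← lintegral_indicator (measurableSet_halfOpenSimplex n r),
    lintegral_eq_ofReal_finrank_mul_lintegral_comp_smul volume _ hr, Module.finrank_fin_fun,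
    ← lintegral_indicator (measurableSet_halfOpenSimplex n 1),
    ← lintegral_const_mul' _ _ ofReal_ne_top, ← lintegral_const_mul' _ _ ofReal_ne_top]
  refine lintegral_congr fun x => ?_
  by_cases hx : x ∈ halfOpenSimplex n 1
  · have hprod : ∏ i, (r • x) i ^ α i = (r ^ ∑ i, α i) * ∏ i, x i ^ α i := by
      simp only [Pi.smul_apply, smul_eq_mul, Real.mul_rpow hr.le (hx.1 _), prod_mul_distrib,
        Real.rpow_sum_of_pos hr]
    rw [indicator_of_mem ((smul_mem_halfOpenSimplex_iff hr).2 hx), indicator_of_mem hx, hprod,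
      ← ofReal_mul (by positivity), ← ofReal_mul (by positivity), Real.rpow_add hr,
      Real.rpow_natCast, mul_assoc]
  · rw [indicator_of_notMem (mt (smul_mem_halfOpenSimplex_iff hr).1 hx), indicator_of_notMem hx,
      mul_zero, mul_zero]

end Simplex

theorem one_add_natCast_add_sum_pos {n : ℕ} {α : Fin n → ℝ} (hα : ∀ i, -1 < α i) :
    0 < 1 + n + ∑ i, α i := by
  have : ∑ _i : Fin n, (-1 : ℝ) ≤ ∑ i, α i := sum_le_sum fun i _ => (hα i).le
  simp only [sum_const, card_univ, Fintype.card_fin, nsmul_eq_mul, mul_neg, mul_one] at this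
  linarith

theorem ofReal_Gamma_mul_lintegral_halfOpenSimplex {n : ℕ} (α : Fin n → ℝ) (hα : ∀ i, -1 < α i) :
    ENNReal.ofReal (Real.Gamma (1 + n + ∑ i, α i)) *
        ∫⁻ x in halfOpenSimplex n 1, ENNReal.ofReal (∏ i, x i ^ α i) =
      ENNReal.ofReal (∏ i, Real.Gamma (1 + α i)) := by
  set I := ∫⁻ x in halfOpenSimplex n 1, ENNReal.ofReal (∏ i, x i ^ α i)
  have hmeas : Measurable fun x : Fin n → ℝ => ENNReal.ofReal (∏ i, x i ^ α i) := by fun_prop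
  calc ENNReal.ofReal (Real.Gamma (1 + n + ∑ i, α i)) * I
      = ∫⁻ r in Ioi 0, ENNReal.ofReal (Real.exp (-r) * r ^ (1 + n + ∑ i, α i - 1)) * I := by
        rw [lintegral_mul_const _ (by fun_prop),
          lintegral_Ioi_exp_neg_mul_rpow (one_add_natCast_add_sum_pos hα)]
    _ = ∫⁻ r, ENNReal.ofReal (Real.exp (-r)) *
          ∫⁻ x in halfOpenSimplex n r, ENNReal.ofReal (∏ i, x i ^ α i) := by
        refine (setLIntegral_congr_fun measurableSet_Ioi fun r (hr : 0 < r) => ?_).trans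
          (setLIntegral_eq_of_support_subset fun r hr => ?_)
        · rw [lintegral_halfOpenSimplex_prod_rpow_eq α hr, ← mul_assoc,
            ← ofReal_mul (Real.exp_pos _).le, add_assoc, add_sub_cancel_left]
        · rcases (halfOpenSimplex n r).eq_empty_or_nonempty with h | ⟨x, hx⟩
          · simp [h] at hr
          · exact pos_of_mem_halfOpenSimplex hx
    _ = ∫⁻ x in univ.pi fun _ => Ici 0,
          ENNReal.ofReal (∏ i, x i ^ α i) * ENNReal.ofReal (Real.exp (-∑ i, x i)) := by
        rw [lintegral_mul_ofReal_exp_neg _ hmeas (by fun_prop)]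
        refine lintegral_congr fun r => ?_
        rw [Measure.restrict_restrict (measurableSet_lt (by fun_prop) measurable_const)]
        congr 3
        ext x
        simp [halfOpenSimplex, and_comm, Pi.le_def]
    _ = ∫⁻ x in univ.pi fun _ => Ici 0, ENNReal.ofReal (∏ i, x i ^ α i * Real.exp (-x i)) := by
        refine setLIntegral_congr_fun (MeasurableSet.univ_pi fun _ => measurableSet_Ici)
          fun x hx => ?_
        rw [prod_mul_distrib, ← Real.exp_sum, sum_neg_distrib,
          ofReal_mul (prod_nonneg fun i _ => Real.rpow_nonneg (hx i trivial) _)]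
    _ = ENNReal.ofReal (∏ i, Real.Gamma (1 + α i)) :=
        lintegral_pi_Ici_prod_rpow_mul_exp_neg α hα

theorem lintegral_closedSimplex_prod_rpow_eq {n : ℕ} (α : Fin n → ℝ) :
    ∫⁻ x in closedSimplex n 1, ENNReal.ofReal (∏ i, x i ^ α i) =
      ∫⁻ x in halfOpenSimplex n 1, ENNReal.ofReal (∏ i, x i ^ α i) := by
  set I := ∫⁻ x in halfOpenSimplex n 1, ENNReal.ofReal (∏ i, x i ^ α i)
  refine le_antisymm ?_ (lintegral_mono_set halfOpenSimplex_subset_closedSimplex)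
  have hlim : Tendsto (fun r : ℝ => ENNReal.ofReal (r ^ (n + ∑ i, α i)) * I) (𝓝[>] 1) (𝓝 I) := by
    have h := ((ENNReal.continuous_ofReal.tendsto _).comp
      (Real.continuousAt_rpow_const 1 (n + ∑ i, α i) (Or.inl one_ne_zero)).tendsto).mono_left
      (nhdsWithin_le_nhds (s := Ioi 1))
    simpa using ENNReal.Tendsto.mul_const h (Or.inl (by simp))
  refine ge_of_tendsto hlim (eventually_nhdsWithin_of_forall fun r (hr : 1 < r) => ?_)
  rw [← lintegral_halfOpenSimplex_prod_rpow_eq α (one_pos.trans hr)]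
  exact lintegral_mono_set (closedSimplex_subset_halfOpenSimplex hr)

theorem setIntegral_closedSimplex_prod_rpow {n : ℕ} (α : Fin n → ℝ) (hα : ∀ i, -1 < α i) :
    ∫ x in closedSimplex n 1, ∏ i, x i ^ α i =
      (∏ i, Real.Gamma (1 + α i)) / Real.Gamma (1 + n + ∑ i, α i) := by
  have hΓ := Real.Gamma_pos_of_pos (one_add_natCast_add_sum_pos hα)
  have hprod : 0 ≤ ∏ i, Real.Gamma (1 + α i) :=
    prod_nonneg fun i _ => (Real.Gamma_pos_of_pos (by linarith [hα i])).le
  have hI := ofReal_Gamma_mul_lintegral_halfOpenSimplex α hα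
  rw [integral_eq_lintegral_of_nonneg_ae ((ae_restrict_iff' (measurableSet_closedSimplex n 1)).2
      (ae_of_all _ fun x hx => prod_nonneg fun i _ => Real.rpow_nonneg (hx.1 i) _))
      (by fun_prop : Measurable _).aestronglyMeasurable,
    lintegral_closedSimplex_prod_rpow_eq, ← ENNReal.toReal_ofReal (div_nonneg hprod hΓ.le),
    ENNReal.ofReal_div_of_pos hΓ, ← hI, mul_comm,
    ENNReal.mul_div_cancel_right (ofReal_pos.2 hΓ).ne' ofReal_ne_top]

theorem integral_monomial_simplex (n : ℕ) (α : Fin n → ℝ) (hα : ∀ i, -1 < α i) :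
    (∫ x in {x : Fin n → ℝ | (∀ i, 0 ≤ x i) ∧ ∑ i, x i ≤ 1}, ∏ i, x i ^ α i =
      (∏ i, Real.Gamma (1 + α i)) / Real.Gamma (1 + n + ∑ i, α i)) ∧
    ∀ β : Fin n → ℕ,
      ∫ x in {x : Fin n → ℝ | (∀ i, 0 ≤ x i) ∧ ∑ i, x i ≤ 1}, ∏ i, x i ^ β i =
        (∏ i, (Nat.factorial (β i) : ℝ)) / (Nat.factorial (n + ∑ i, β i) : ℝ) := by
  refine ⟨setIntegral_closedSimplex_prod_rpow α hα, fun β => ?_⟩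
  have h := setIntegral_closedSimplex_prod_rpow (fun i => (β i : ℝ)) fun i => by
    linarith [(β i).cast_nonneg (α := ℝ)]
  simp only [Real.rpow_natCast] at h
  refine h.trans ?_
  rw [← Nat.cast_sum, add_assoc, ← Nat.cast_add]
  simp only [Real.Gamma_one_add_natCast]
end
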